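/- For all i ≥ 1 and all n with 9·2^{i-1} - 1 ≤ n ≤ 3·2^{i+1}, the set {3·2^{i-1} - 1, 2^{i+1} - 1, 3·2^i - 1, 2^{i+2} - 1} is a string attractor for the prefix of length n of the Thue-Morse word. -/

import Mathlib

def IsAttractor {α : Type*} (w : ℕ → α) (n : ℕ) (S : Finset ℕ) : Prop :=
  (∀ s ∈ S, s < n) ∧
  ∀ i j : ℕ, i ≤ j → j < n →
    ∃ i' j' : ℕ, i' ≤ j' ∧ j' < n ∧ j' - i' = j - i ∧
      (∀ t, t ≤ j - i → w (i' + t) = w (i + t)) ∧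
      ∃ s ∈ S, i' ≤ s ∧ s ≤ j'

def tmStep : ℕ → List ℕ
  | 0 => [0, 1]
  | _ => [1, 0]

def tmIter : ℕ → List ℕ
  | 0 => [0]
  | k + 1 => (tmIter k).flatMap tmStep

/-- The Thue-Morse word: fixed point, starting with 0, of 0 → 01, 1 → 10. -/
def tm (n : ℕ) : ℕ := (tmIter (n + 1)).getD n 0


lemma tmStep_length (x : ℕ) : (tmStep x).length = 2 := by cases x <;> rfl

lemma tmIter_length (k : ℕ) : (tmIter k).length = 2 ^ k := by
  induction k with
  | zero => rfl
  | succ k ih =>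
    simp only [tmIter, List.length_flatMap]
    have : (List.map (List.length ∘ tmStep) (tmIter k)) = List.replicate (tmIter k).length 2 := by
      rw [show (tmIter k).length = (List.map (List.length ∘ tmStep) (tmIter k)).length by simp]
      apply List.eq_replicate_of_mem
      intro x hx
      simp only [List.mem_map] at hx
      obtain ⟨y, _, rfl⟩ := hx
      exact tmStep_length y
    rw [show (fun a => (tmStep a).length) = List.length ∘ tmStep from rfl, this, List.sum_replicate, ih]
    simp [pow_succ, Nat.mul_comm]

lemma flatMap_getD (l : List ℕ) (j r : ℕ) (hr : r < 2) (hj : j < l.length) :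
    (l.flatMap tmStep).getD (2 * j + r) 0 = (tmStep (l.getD j 0)).getD r 0 := by
  induction l generalizing j with
  | nil => simp at hj
  | cons a l ih =>
    cases j with
    | zero =>
      rw [List.flatMap_cons]
      rw [List.getD_append _ _ _ _ (by rw [tmStep_length]; omega)]
      simp
    | succ j =>
      rw [List.flatMap_cons]
      rw [List.getD_append_right _ _ _ _ (by rw [tmStep_length]; omega)]
      rw [tmStep_length]
      have : 2 * (j + 1) + r - 2 = 2 * j + r := by omega
      rw [this]
      simpa using ih j (by simpa using hj)

lemma tmIter_prefix (k : ℕ) : tmIter k <+: tmIter (k + 1) := by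
  induction k with
  | zero => exact ⟨[1], rfl⟩
  | succ k ih =>
    obtain ⟨t, ht⟩ := ih
    refine ⟨t.flatMap tmStep, ?_⟩
    show (tmIter k).flatMap tmStep ++ _ = (tmIter (k + 1)).flatMap tmStep
    rw [← ht, List.flatMap_append]

lemma getD_of_prefix {l₁ l₂ : List ℕ} (h : l₁ <+: l₂) {n : ℕ} (hn : n < l₁.length) :
    l₂.getD n 0 = l₁.getD n 0 := by
  obtain ⟨t, rfl⟩ := h
  exact List.getD_append _ _ _ _ hn

lemma tmIter_stable : ∀ m k n : ℕ, k ≤ m → n < 2 ^ k →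
    (tmIter m).getD n 0 = (tmIter k).getD n 0 := by
  intro m
  induction m with
  | zero => intro k n hk _; interval_cases k; rfl
  | succ m ih =>
    intro k n hk hn
    rcases Nat.eq_or_lt_of_le hk with h | h
    · rw [h]
    · have hkm : k ≤ m := by omega
      rw [getD_of_prefix (tmIter_prefix m)
        (by rw [tmIter_length]; exact lt_of_lt_of_le hn (Nat.pow_le_pow_right (by norm_num) hkm))]
      exact ih k n hkm hn

lemma tm_eq_iter {k n : ℕ} (hn : n < 2 ^ k) : tm n = (tmIter k).getD n 0 := by
  have h1 : n < 2 ^ (n + 1) := (Nat.lt_two_pow_self (n := n)) |>.trans (Nat.pow_lt_pow_right (by norm_num) (by omega))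
  rcases le_total k (n + 1) with h | h
  · exact tmIter_stable (n + 1) k n h hn
  · exact (tmIter_stable k (n + 1) n h h1).symm

lemma tm_le_one (n : ℕ) : tm n ≤ 1 := by
  have hmem : ∀ k, ∀ x ∈ tmIter k, x ≤ 1 := by
    intro k
    induction k with
    | zero => intro x hx; simp [tmIter] at hx; omega
    | succ k ih =>
      intro x hx
      simp only [tmIter, List.mem_flatMap] at hx
      obtain ⟨y, _, hy⟩ := hx
      rcases y with _ | y <;> simp [tmStep] at hy <;> omega
  have hlen : n < (tmIter (n + 1)).length := by
    rw [tmIter_length]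
    exact (Nat.lt_two_pow_self (n := n)) |>.trans (Nat.pow_lt_pow_right (by norm_num) (by omega))
  rw [tm, List.getD_eq_getElem _ _ hlen]
  exact hmem _ _ (List.getElem_mem _)

lemma tm_two_mul (n : ℕ) : tm (2 * n) = tm n := by
  have hn : n < 2 ^ (n + 1) := (Nat.lt_two_pow_self (n := n)) |>.trans (Nat.pow_lt_pow_right (by norm_num) (by omega))
  have h2n : 2 * n < 2 ^ (n + 2) := by
    have e : (2:ℕ) ^ (n + 2) = 2 * 2 ^ (n + 1) := by ring
    omega
  rw [tm_eq_iter h2n, show (2:ℕ)*n = 2*n+0 by ring,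
    show tmIter (n+2) = (tmIter (n+1)).flatMap tmStep from rfl,
    flatMap_getD _ _ _ (by norm_num) (by rw [tmIter_length]; exact hn), ← tm]
  have := tm_le_one n
  interval_cases h : tm n <;> rfl

lemma tm_two_mul_add_one (n : ℕ) : tm (2 * n + 1) = 1 - tm n := by
  have hn : n < 2 ^ (n + 1) := (Nat.lt_two_pow_self (n := n)) |>.trans (Nat.pow_lt_pow_right (by norm_num) (by omega))
  have h2n : 2 * n + 1 < 2 ^ (n + 2) := by
    have e : (2:ℕ) ^ (n + 2) = 2 * 2 ^ (n + 1) := by ring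
    omega
  rw [tm_eq_iter h2n,
    show tmIter (n+2) = (tmIter (n+1)).flatMap tmStep from rfl,
    flatMap_getD _ _ _ (by norm_num) (by rw [tmIter_length]; exact hn), ← tm]
  have := tm_le_one n
  interval_cases h : tm n <;> rfl

lemma tm_zero : tm 0 = 0 := rfl

lemma tm_one : tm 1 = 1 := by
  rw [show (1:ℕ) = 2 * 0 + 1 by norm_num, tm_two_mul_add_one, tm_zero]

lemma tm_pow (k : ℕ) : tm (2 ^ k) = 1 := by
  induction k with
  | zero => simpa using tm_one
  | succ k ih => rw [pow_succ, Nat.mul_comm, tm_two_mul, ih]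

lemma tm_pow_sub_one (k : ℕ) : tm (2 ^ k - 1) = k % 2 := by
  induction k with
  | zero => norm_num [tm_zero]
  | succ k ih =>
    have h1 : (1:ℕ) ≤ 2 ^ k := Nat.one_le_two_pow
    have e : 2 ^ (k + 1) - 1 = 2 * (2 ^ k - 1) + 1 := by
      have : (2:ℕ) ^ (k + 1) = 2 * 2 ^ k := by ring
      omega
    rw [e, tm_two_mul_add_one, ih]
    omega

lemma tm_three_pow (k : ℕ) : tm (3 * 2 ^ k) = 0 := by
  induction k with
  | zero =>
    rw [show 3 * 2 ^ 0 = 2 * 1 + 1 by norm_num, tm_two_mul_add_one, tm_one]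
  | succ k ih => rw [show 3 * 2 ^ (k + 1) = 2 * (3 * 2 ^ k) by ring, tm_two_mul, ih]

lemma tm_three_pow_sub_one (k : ℕ) : tm (3 * 2 ^ k - 1) = (k + 1) % 2 := by
  induction k with
  | zero =>
    rw [show 3 * 2 ^ 0 - 1 = 2 * 1 by norm_num, tm_two_mul, tm_one]
  | succ k ih =>
    have h1 : (1:ℕ) ≤ 2 ^ k := Nat.one_le_two_pow
    have e : 3 * 2 ^ (k + 1) - 1 = 2 * (3 * 2 ^ k - 1) + 1 := by
      have : (2:ℕ) ^ (k + 1) = 2 * 2 ^ k := by ring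
      omega
    rw [e, tm_two_mul_add_one, ih]
    omega

def tmFAux : ℕ → ℕ → ℕ
  | 0, _ => 0
  | f + 1, n => if n = 0 then 0 else (n % 2 + tmFAux f (n / 2)) % 2

def tmF (n : ℕ) : ℕ := tmFAux n n

lemma tmFAux_stable : ∀ f f' n : ℕ, n ≤ f → n ≤ f' → tmFAux f n = tmFAux f' n := by
  intro f
  induction f with
  | zero =>
    intro f' n hf _
    interval_cases n
    cases f' <;> rfl
  | succ f ih =>
    intro f' n hf hf'
    cases n with
    | zero => cases f' <;> rfl
    | succ n =>
      cases f' with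
      | zero => omega
      | succ f' =>
        show (if n + 1 = 0 then 0 else ((n+1) % 2 + tmFAux f ((n+1) / 2)) % 2)
          = (if n + 1 = 0 then 0 else ((n+1) % 2 + tmFAux f' ((n+1) / 2)) % 2)
        rw [ih f' ((n+1)/2) (by omega) (by omega)]

lemma tm_eq_tmF : ∀ n, tm n = tmF n := by
  intro n
  induction n using Nat.strong_induction_on with
  | _ n ih =>
    match n with
    | 0 => rfl
    | n + 1 =>
      have hrec : tmF (n + 1) = ((n + 1) % 2 + tmF ((n + 1) / 2)) % 2 := by
        show tmFAux (n + 1) (n + 1) = _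
        rw [show tmFAux (n+1) (n+1) = if n + 1 = 0 then 0 else ((n+1) % 2 + tmFAux n ((n+1)/2)) % 2 from rfl]
        rw [if_neg (by omega), tmFAux_stable n ((n+1)/2) ((n+1)/2) (by omega) (by omega)]
        rfl
      have hrec2 : tmF (n + 1) = ((n + 1) % 2 + tm ((n + 1) / 2)) % 2 := by
        rw [hrec, ih ((n + 1) / 2) (by omega)]
      have hle := tm_le_one ((n + 1) / 2)
      rcases Nat.even_or_odd (n + 1) with h | h
      · have hmod : (n + 1) % 2 = 0 := by
          obtain ⟨m, hm⟩ := h; omega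
        have h1 : tm (n + 1) = tm ((n + 1) / 2) := by
          conv_lhs => rw [show n + 1 = 2 * ((n + 1) / 2) by omega]
          rw [tm_two_mul]
        rw [hrec2, h1, hmod]
        omega
      · have hmod : (n + 1) % 2 = 1 := by
          obtain ⟨m, hm⟩ := h; omega
        have h1 : tm (n + 1) = 1 - tm ((n + 1) / 2) := by
          conv_lhs => rw [show n + 1 = 2 * ((n + 1) / 2) + 1 by omega]
          rw [tm_two_mul_add_one]
        rw [hrec2, h1, hmod]
        omega

def Sset (p : ℕ) : Finset ℕ :=
  {3 * 2 ^ (p - 1) - 1, 2 ^ (p + 1) - 1, 3 * 2 ^ p - 1, 2 ^ (p + 2) - 1}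

def Strong (p : ℕ) : Prop :=
  ∀ flag : Bool, ∀ i j : ℕ, i < j → j ≤ 3 * 2 ^ (p + 1) - 1 →
    ∃ i' j' s : ℕ, i' ≤ j' ∧ j' - i' = j - i ∧
      (∀ t ≤ j - i, tm (i' + t) = tm (i + t)) ∧
      (j' ≤ j ∨ j' ≤ 9 * 2 ^ (p - 1) - 2 + (if flag then 1 else 0)) ∧
      s ∈ Sset p ∧ i' ≤ s ∧ s ≤ j' ∧ (flag = true → s < j')

set_option synthInstance.maxSize 2000 in
set_option synthInstance.maxHeartbeats 2000000 in
set_option maxHeartbeats 4000000 in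
lemma base_bounded : ∀ flag : Bool, ∀ j < 12, ∀ i < j, ∃ j' ∈ Finset.range 12,
    j - i ≤ j' ∧ (∀ t < 12, t ≤ j - i → tmF (j' - (j - i) + t) = tmF (i + t)) ∧
    (j' ≤ j ∨ j' ≤ 7 + (if flag then 1 else 0)) ∧
    ∃ s ∈ Finset.range 12, (s = 2 ∨ s = 3 ∨ s = 5 ∨ s = 7) ∧ j' - (j - i) ≤ s ∧ s ≤ j' ∧
      (flag = true → s < j') := by decide

lemma strong_one : Strong 1 := by
  intro flag i j hij hj
  have hj12 : j < 12 := by norm_num at hj; omega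
  obtain ⟨j', hj'mem, hle, hmatch, hbnd, s, hsmem, hsval, hs1, hs2, hs3⟩ :=
    base_bounded flag j hj12 i hij
  simp only [Finset.mem_range] at hj'mem hsmem
  refine ⟨j' - (j - i), j', s, by omega, by omega, ?_, ?_, ?_, hs1, hs2, hs3⟩
  · intro t ht
    have := hmatch t (by omega) ht
    rw [tm_eq_tmF, tm_eq_tmF]
    exact this
  · simpa using hbnd
  · simp only [Sset, Finset.mem_insert, Finset.mem_singleton]
    norm_num
    omega

lemma strong_step (p : ℕ) (hp : 1 ≤ p) (IH : Strong p) : Strong (p + 1) := by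
  have hp1 : p - 1 + 1 = p := by omega
  have h2p : (2:ℕ) ^ p = 2 * 2 ^ (p - 1) := by
    conv_lhs => rw [← hp1, pow_succ]
    ring
  have h2p1 : (2:ℕ) ^ (p + 1) = 4 * 2 ^ (p - 1) := by rw [pow_succ, h2p]; ring
  have h2p2 : (2:ℕ) ^ (p + 2) = 8 * 2 ^ (p - 1) := by
    rw [show p + 2 = (p + 1) + 1 from rfl, pow_succ, h2p1]; ring
  have h2p3 : (2:ℕ) ^ (p + 3) = 16 * 2 ^ (p - 1) := by
    rw [show p + 3 = (p + 2) + 1 from rfl, pow_succ, h2p2]; ring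
  have hA : (2:ℕ) ^ (p + 1 - 1) = 2 * 2 ^ (p - 1) := by rw [Nat.add_sub_cancel, h2p]
  have hB : (2:ℕ) ^ (p + 1 + 1) = 8 * 2 ^ (p - 1) := by
    rw [show p + 1 + 1 = p + 2 from rfl, h2p2]
  have hC : (2:ℕ) ^ (p + 1 + 2) = 16 * 2 ^ (p - 1) := by
    rw [show p + 1 + 2 = p + 3 from rfl, h2p3]
  have hE : (1:ℕ) ≤ 2 ^ (p - 1) := Nat.one_le_two_pow
  intro flag i j hij hj
  by_cases hab : i / 2 < j / 2
  · -- recursive case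
    obtain ⟨a', b', s, h1, h2, hmatch, hbnd, hsmem, hs1, hs2, hstrict⟩ :=
      IH (flag || decide (j % 2 = 0)) (i / 2) (j / 2) hab (by omega)
    have hj'eq : 2 * a' + i % 2 + (j - i) = 2 * b' + j % 2 := by omega
    refine ⟨2 * a' + i % 2, 2 * a' + i % 2 + (j - i), 2 * s + 1,
      by omega, by omega, ?_, ?_, ?_, by omega, ?_, ?_⟩
    · -- matching
      intro t ht
      have hq : (i % 2 + t) / 2 ≤ j / 2 - i / 2 := by omega
      have hm := hmatch ((i % 2 + t) / 2) hq
      rcases Nat.mod_two_eq_zero_or_one (i % 2 + t) with hr | hr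
      · rw [show 2 * a' + i % 2 + t = 2 * (a' + (i % 2 + t) / 2) by omega,
          show i + t = 2 * (i / 2 + (i % 2 + t) / 2) by omega,
          tm_two_mul, tm_two_mul, hm]
      · rw [show 2 * a' + i % 2 + t = 2 * (a' + (i % 2 + t) / 2) + 1 by omega,
          show i + t = 2 * (i / 2 + (i % 2 + t) / 2) + 1 by omega,
          tm_two_mul_add_one, tm_two_mul_add_one, hm]
    · -- bound
      simp only [Nat.add_sub_cancel]
      rcases hbnd with hb | hb
      · left; omega
      · right
        by_cases hf : flag = true
        · rw [hf] at hb ⊢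
          rw [if_pos (by simp)] at hb
          rw [if_pos rfl]
          omega
        · have hf' : flag = false := by
            cases flag
            · rfl
            · exact absurd rfl hf
          rw [hf'] at hb ⊢
          rw [if_neg (by simp)]
          by_cases hj0 : j % 2 = 0
          · rw [if_pos (by simp [hj0])] at hb
            omega
          · rw [if_neg (by simp [hj0])] at hb
            omega
    · -- membership
      simp only [Sset, Finset.mem_insert, Finset.mem_singleton] at hsmem ⊢
      omega
    · -- s' ≤ j'
      by_cases hj0 : j % 2 = 0
      · have hlt : s < b' := hstrict (by simp [hj0])
        omega
      · omega
    · -- strictness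
      intro hf
      have hlt : s < b' := hstrict (by rw [hf]; simp)
      omega
  · -- block case
    have hi2 : i % 2 = 0 := by omega
    have hji : j = i + 1 := by omega
    have hc := tm_le_one (i / 2)
    have htmi : tm i = tm (i / 2) := by
      conv_lhs => rw [show i = 2 * (i / 2) by omega]
      rw [tm_two_mul]
    have htmj : tm j = 1 - tm (i / 2) := by
      conv_lhs => rw [show j = 2 * (i / 2) + 1 by omega]
      rw [tm_two_mul_add_one]
    have key : ∃ s' : ℕ, s' ∈ Sset (p + 1) ∧ s' + 1 ≤ 18 * 2 ^ (p - 1) - 2 ∧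
        tm s' = tm i ∧ tm (s' + 1) = tm j := by
      by_cases hpar : p % 2 = 0
      · by_cases hc1 : tm (i / 2) = 1
        · refine ⟨3 * 2 ^ p - 1, ?_, by omega, ?_, ?_⟩
          · simp [Sset]
          · rw [tm_three_pow_sub_one, htmi, hc1]; omega
          · rw [show 3 * 2 ^ p - 1 + 1 = 3 * 2 ^ p by omega, tm_three_pow, htmj, hc1]
        · have hc0 : tm (i / 2) = 0 := by omega
          refine ⟨2 ^ (p + 2) - 1, ?_, by omega, ?_, ?_⟩
          · simp [Sset]
          · rw [tm_pow_sub_one, htmi, hc0]; omega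
          · rw [show 2 ^ (p + 2) - 1 + 1 = 2 ^ (p + 2) by omega, tm_pow, htmj, hc0]
      · by_cases hc1 : tm (i / 2) = 1
        · refine ⟨3 * 2 ^ (p + 1) - 1, ?_, by omega, ?_, ?_⟩
          · simp [Sset]
          · rw [tm_three_pow_sub_one, htmi, hc1]; omega
          · rw [show 3 * 2 ^ (p + 1) - 1 + 1 = 3 * 2 ^ (p + 1) by omega, tm_three_pow, htmj, hc1]
        · have hc0 : tm (i / 2) = 0 := by omega
          refine ⟨2 ^ (p + 3) - 1, ?_, by omega, ?_, ?_⟩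
          · simp [Sset]
          · rw [tm_pow_sub_one, htmi, hc0]; omega
          · rw [show 2 ^ (p + 3) - 1 + 1 = 2 ^ (p + 3) by omega, tm_pow, htmj, hc0]
    obtain ⟨s', hmem, hbd, he0, he1⟩ := key
    refine ⟨s', s' + 1, s', by omega, by omega, ?_, ?_, hmem, by omega, by omega, by omega⟩
    · intro t ht
      have hji1 : j - i = 1 := by omega
      rw [hji1] at ht
      interval_cases t
      · simpa using he0
      · rw [show i + 1 = j by omega]; exact he1
    · right
      simp only [Nat.add_sub_cancel]
      by_cases hf : flag = true
      · rw [hf, if_pos rfl]; omega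
      · have hf' : flag = false := by
          cases flag
          · rfl
          · exact absurd rfl hf
        rw [hf', if_neg (by simp)]; omega

lemma strong_all : ∀ p, 1 ≤ p → Strong p := by
  intro p
  induction p with
  | zero => omega
  | succ p ih =>
    intro _
    rcases Nat.eq_zero_or_pos p with h | h
    · subst h; exact strong_one
    · exact strong_step p h (ih h)


/-- For `i ≥ 1` and `9·2^{i-1} - 1 ≤ n ≤ 3·2^{i+1}`, the set
`{3·2^{i-1} - 1, 2^{i+1} - 1, 3·2^i - 1, 2^{i+2} - 1}` is a string attractor for
the length-`n` prefix of Thue-Morse. -/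
theorem tm_attractor_b :
    ∀ i : ℕ, 1 ≤ i → ∀ n : ℕ, 9 * 2 ^ (i - 1) - 1 ≤ n → n ≤ 3 * 2 ^ (i + 1) →
      IsAttractor tm n
        ({3 * 2 ^ (i - 1) - 1, 2 ^ (i + 1) - 1, 3 * 2 ^ i - 1, 2 ^ (i + 2) - 1} : Finset ℕ) := by
  intro p hp n hn1 hn2
  have hp1 : p - 1 + 1 = p := by omega
  have h2p : (2:ℕ) ^ p = 2 * 2 ^ (p - 1) := by
    conv_lhs => rw [← hp1, pow_succ]
    ring
  have h2p1 : (2:ℕ) ^ (p + 1) = 4 * 2 ^ (p - 1) := by rw [pow_succ, h2p]; ring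
  have h2p2 : (2:ℕ) ^ (p + 2) = 8 * 2 ^ (p - 1) := by
    rw [show p + 2 = (p + 1) + 1 from rfl, pow_succ, h2p1]; ring
  have hE : (1:ℕ) ≤ 2 ^ (p - 1) := Nat.one_le_two_pow
  constructor
  · intro s hs
    simp only [Finset.mem_insert, Finset.mem_singleton] at hs
    omega
  · intro i j hij hjn
    rcases Nat.eq_or_lt_of_le hij with he | hlt
    · -- single character
      subst he
      by_cases h : tm i = (p + 1) % 2
      · refine ⟨2 ^ (p + 1) - 1, 2 ^ (p + 1) - 1, le_refl _, by omega, by omega, ?_,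
          ⟨2 ^ (p + 1) - 1, by simp, le_refl _, le_refl _⟩⟩
        intro t ht
        have ht0 : t = 0 := by omega
        subst ht0
        simp only [Nat.add_zero]
        rw [tm_pow_sub_one, h]
      · have h' : tm i = p % 2 := by
          have := tm_le_one i
          omega
        refine ⟨2 ^ (p + 2) - 1, 2 ^ (p + 2) - 1, le_refl _, by omega, by omega, ?_,
          ⟨2 ^ (p + 2) - 1, by simp, le_refl _, le_refl _⟩⟩
        intro t ht
        have ht0 : t = 0 := by omega
        subst ht0
        simp only [Nat.add_zero]
        rw [tm_pow_sub_one]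
        omega
    · -- length at least 2
      obtain ⟨i', j', s, h1, h2, hm, hb, hsm, hs1, hs2, _⟩ :=
        strong_all p hp false i j hlt (by omega)
      refine ⟨i', j', h1, ?_, h2, hm, ⟨s, by simpa [Sset] using hsm, hs1, hs2⟩⟩
      rcases hb with hb | hb
      · omega
      · rw [if_neg (by simp)] at hb
        omega
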